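/- Let C_n be the standard chain and p = p_+ + p_-. For each root α of G and splitting type β ∈ Λ^n with all β_i in a common Weyl chamber, the line bundle L_α(−p) = O(−1|α·β_1|…|α·β_n|1) satisfies H^0(L_α(−p)) = 0. Consequently, for the short exact sequence 0 → ⊕_{α∈Φ} L_α → S_G → S_T → 0 of sheaves on C_n, the induced map Ext^1_{C_n}(S_T, O(−p)) → Ext^1_{C_n}(S_G, O(−p)) is injective; i.e., the derivative of the extension-of-structure-group map from framed T-bundle chain deformations to framed G-bundle chain deformations is injective. -/
import Mathlib


/-!
STATEMENT 16: Let `C_n` be the standard chain, `p = p₊ + p₋`, `G` split reductive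
with maximal torus `T`, roots `Φ` (linear functionals on the cocharacter lattice
`Λ`, closed under negation), and `β ∈ Λⁿ` a splitting type with all `β_i` in a
common Weyl chamber (no root strictly separates them).

Part 1: For each root `α`, the line bundle `L_α(-p) = O(-1|α·β₁|…|α·β_n|1)` has
`H⁰(L_α(-p)) = 0`.  Invariant sections are modelled concretely by `IsInvSection`;
they form the additive group `secGroup`.

Part 2: Consequently, for the short exact sequence
`0 → ⊕_{α∈Φ} L_α → S_G → S_T → 0` of sheaves on `C_n`, the induced map
`Ext¹(S_T, O(-p)) → Ext¹(S_G, O(-p))` is injective — the derivative of the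
extension-of-structure-group map from framed `T`-bundle chain deformations to
framed `G`-bundle chain deformations is injective.  The homological input from the
long exact sequence is encoded by: `A = Hom(⊕_α L_α, O(-p)) ≅ ⊕_α H⁰(L_{-α}(-p))`,
which (Φ being closed under negation) is identified with the product of the section
groups of the weight tuples `(-1|α·β|1)` (hypothesis `hA`), together with the
exactness of `A → Ext¹(S_T,O(-p)) → Ext¹(S_G,O(-p))` (hypothesis `hexact`).
-/

/-- Invariant global sections of the equivariant line bundle `O(b₀|…|b_{n+1})` on the
standard chain, in coefficient form. -/
def IsInvSection (n : ℕ) {k : Type*} [Field k]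
    (b : Fin (n + 2) → ℤ) (s : Fin (n + 1) → k) : Prop :=
  (∀ c : Fin (n + 1), s c ≠ 0 → 0 ≤ b c.castSucc ∧ b c.succ ≤ 0) ∧
  (∀ c : Fin n, b c.succ.castSucc = 0 → s c.castSucc = s c.succ)

/-- The additive group of invariant sections `H⁰` of `O(b₀|…|b_{n+1})`. -/
def secGroup (n : ℕ) (k : Type*) [Field k] (b : Fin (n + 2) → ℤ) :
    AddSubgroup (Fin (n + 1) → k) where
  carrier := {s | IsInvSection n b s}
  zero_mem' := ⟨fun _ h => absurd rfl h, fun _ _ => rfl⟩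
  add_mem' := by
    rintro s t ⟨hs1, hs2⟩ ⟨ht1, ht2⟩
    refine ⟨fun c h => ?_, fun c hb' => by
      simp only [Pi.add_apply, hs2 c hb', ht2 c hb']⟩
    by_cases h1 : s c = 0
    · exact ht1 c (by simpa [h1] using h)
    · exact hs1 c h1
  neg_mem' := by
    rintro s ⟨hs1, hs2⟩
    exact ⟨fun c h => hs1 c (by simpa using h),
      fun c hb' => by simp only [Pi.neg_apply, hs2 c hb']⟩

/-- The weight tuple `(-1 | α·β₁ | … | α·β_n | 1)` of `L_α(-p)`. -/
def rootWeights {n : ℕ} {Λ : Type*} [AddCommGroup Λ]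
    (α : Λ →+ ℤ) (β : Fin n → Λ) : Fin (n + 2) → ℤ :=
  Fin.cons (-1) (Fin.snoc (fun i => α (β i)) 1)

section Aux
variable {n : ℕ} {Λ : Type*} [AddCommGroup Λ]

lemma rootWeights_zero (α : Λ →+ ℤ) (β : Fin n → Λ) : rootWeights α β 0 = -1 := rfl

lemma rootWeights_last (α : Λ →+ ℤ) (β : Fin n → Λ) :
    rootWeights α β (Fin.last n).succ = 1 := by
  rw [rootWeights, Fin.cons_succ, Fin.snoc_last]

lemma rootWeights_mid (α : Λ →+ ℤ) (β : Fin n → Λ) (i : Fin n) :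
    rootWeights α β i.succ.castSucc = α (β i) := by
  rw [← Fin.succ_castSucc, rootWeights, Fin.cons_succ, Fin.snoc_castSucc]

lemma section_vanishes {k : Type*} [Field k] (α : Λ →+ ℤ) (β : Fin n → Λ)
    (hch : (∀ i, 0 ≤ α (β i)) ∨ (∀ i, α (β i) ≤ 0))
    (s : Fin (n + 1) → k) (hs : IsInvSection n (rootWeights α β) s) : s = 0 := by
  obtain ⟨h1, h2⟩ := hs
  funext c
  show s c = 0
  rcases hch with hpos | hneg
  · -- propagate nonzeroness to the right; use reverse induction
    induction c using Fin.reverseInduction with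
    | last =>
      by_contra h
      have := (h1 _ h).2
      rw [rootWeights_last] at this
      omega
    | cast i ih =>
      by_contra h
      have hb := (h1 _ h).2
      rw [Fin.succ_castSucc, rootWeights_mid] at hb
      have hz : rootWeights α β i.succ.castSucc = 0 := by
        rw [rootWeights_mid]; exact le_antisymm hb (hpos i)
      exact h ((h2 i hz).trans ih)
  · induction c using Fin.induction with
    | zero =>
      by_contra h
      have := (h1 _ h).1
      have h0 : (0 : Fin (n + 1)).castSucc = 0 := rfl
      rw [h0, rootWeights_zero] at this
      omega
    | succ i ih =>
      by_contra h
      have hb := (h1 _ h).1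
      rw [rootWeights_mid] at hb
      have hz : rootWeights α β i.succ.castSucc = 0 := by
        rw [rootWeights_mid]; exact le_antisymm (hneg i) hb
      exact h ((h2 i hz).symm.trans ih)

end Aux

theorem H0_vanishing_and_ext_injective
    (n : ℕ) (k : Type*) [Field k]
    {Λ : Type*} [AddCommGroup Λ]
    (Φ : Finset (Λ →+ ℤ)) (hΦneg : ∀ α ∈ Φ, -α ∈ Φ)
    (β : Fin n → Λ)
    (hchamber : ∀ α ∈ Φ, (∀ i, 0 ≤ α (β i)) ∨ (∀ i, α (β i) ≤ 0))
    -- homological data from the long exact sequence: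
    (A B C : Type*) [AddCommGroup A] [AddCommGroup B] [AddCommGroup C]
    -- `A = Hom(⊕_α L_α, O(-p)) ≅ ∏_α H⁰(O(-1|α·β|1))` (using `-Φ = Φ`):
    (hA : Nonempty (A ≃+ ((α : {a : Λ →+ ℤ // a ∈ Φ}) → secGroup n k (rootWeights α.1 β))))
    -- `B = Ext¹(S_T, O(-p))`, `C = Ext¹(S_G, O(-p))`, and the sequence
    -- `A → B → C` from `0 → ⊕_α L_α → S_G → S_T → 0` is exact:
    (f : A →+ B) (g : B →+ C) (hexact : Function.Exact ⇑f ⇑g) :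
    (∀ α ∈ Φ, ∀ s : Fin (n + 1) → k, IsInvSection n (rootWeights α β) s → s = 0) ∧
    Function.Injective ⇑g := by
  have part1 : ∀ α ∈ Φ, ∀ s : Fin (n + 1) → k,
      IsInvSection n (rootWeights α β) s → s = 0 := fun α hα s hs =>
    section_vanishes α β (hchamber α hα) s hs
  refine ⟨part1, ?_⟩
  obtain ⟨e⟩ := hA
  have hsub : Subsingleton A := by
    have htgt : Subsingleton ((α : {a : Λ →+ ℤ // a ∈ Φ}) →
        secGroup n k (rootWeights α.1 β)) := by
      refine ⟨fun x y => funext fun α => ?_⟩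
      have hx := part1 α.1 α.2 (x α).1 (x α).2
      have hy := part1 α.1 α.2 (y α).1 (y α).2
      exact Subtype.ext (hx.trans hy.symm)
    exact e.injective.subsingleton
  have hker : ∀ b : B, g b = 0 → b = 0 := by
    intro b hb
    obtain ⟨a, ha⟩ := (hexact b).mp hb
    rw [← ha, Subsingleton.elim a 0, map_zero]
  intro b b' hbb
  have : g (b - b') = 0 := by rw [map_sub, hbb, sub_self]
  have := hker _ this
  exact sub_eq_zero.mp this
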